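/- Let G be a locally compact group, 𝒜 a unital left-translation-invariant C*-subalgebra of LUC(G), U an open neighbourhood of e, and T a right U-uniformly discrete 𝒜-set. Then for each open neighbourhood V of e with closure(V) ⊆ U, the natural map (v, x) ↦ ε(v)x from V × closure(ε(T)) onto ε(V)·closure(ε(T)) ⊆ G^𝒜 is a homeomorphism, and closure(ε(T)) is homeomorphic to the Stone–Čech compactification βT of the discrete set T. -/

import Mathlib

open Pointwise

/-- An abstract model of the compactification `G^𝒜` associated to a unital
left-translation-invariant C*-subalgebra `A` of `CB(G)`: a compact Hausdorff space `X` together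
with the (dense-range) evaluation map `ε : G → X`, the natural left action of `G` on `X`
(`(ε(s)x)(f) = x(ₛf)`), and the Gelfand correspondence identifying `A` with `C(X)`. -/
structure GCompactification (G : Type*) [TopologicalSpace G] [Group G]
    (A : Set (G → ℂ)) (X : Type*) [TopologicalSpace X] [CompactSpace X] [T2Space X] where
  eps : G → X
  dense : DenseRange eps
  act : G → X → X
  act_eps : ∀ s t : G, act s (eps t) = eps (s * t)
  act_mul : ∀ s t : G, ∀ x : X, act (s * t) x = act s (act t x)
  act_cont : ∀ s : G, Continuous (act s)
  gelfand : (G → ℂ) → (X → ℂ)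
  gelfand_cont : ∀ f ∈ A, Continuous (gelfand f)
  gelfand_eps : ∀ f ∈ A, ∀ s : G, gelfand f (eps s) = f s
  mem_of_cont : ∀ φ : X → ℂ, Continuous φ → (fun s => φ (eps s)) ∈ A

/-- The semigroup compactification `G^𝒜` of an admissible subalgebra `A`: additionally `X` carries
an associative multiplication which is right topological, extends that of `G`, and restricts to
the action of `G`. -/
structure GSemigroupCompactification (G : Type*) [TopologicalSpace G] [Group G]
    (A : Set (G → ℂ)) (X : Type*) [TopologicalSpace X] [CompactSpace X] [T2Space X]
    extends GCompactification G A X where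
  mul : X → X → X
  mul_assoc : ∀ x y z : X, mul (mul x y) z = mul x (mul y z)
  right_cont : ∀ y : X, Continuous fun x => mul x y
  eps_act : ∀ (s : G) (x : X), mul (eps s) x = act s x

/-- `T` is an `𝒜`-set: for every open neighbourhood `U` of `e` there is an open neighbourhood `V`
of `e` with `closure V ⊆ U` such that for each `T₁ ⊆ T` some `h ∈ A` is `1` on `VT₁` and `0` off
`UT₁`. -/
def IsASet {G : Type*} [TopologicalSpace G] [Group G] (A : Set (G → ℂ)) (T : Set G) : Prop :=
  ∀ U : Set G, IsOpen U → (1 : G) ∈ U →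
    ∃ V : Set G, IsOpen V ∧ (1 : G) ∈ V ∧ closure V ⊆ U ∧
      ∀ T₁ ⊆ T, ∃ h ∈ A, (∀ x ∈ V * T₁, h x = 1) ∧ (∀ x ∉ U * T₁, h x = 0)

/-- Right translation-compact subsets of a topological group. -/
def RightTranslationCompact {G : Type*} [Group G] [TopologicalSpace G] (T : Set G) : Prop :=
  ∀ L : Set G, ¬ IsCompact (closure L) →
    ∃ F : Set G, F ⊆ L ∧ F.Finite ∧ IsCompact (closure (⋂ b ∈ F, (b * ·) ⁻¹' T))

/-- A copy of the set `T` carrying the discrete topology. -/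
def DiscreteCopy {G : Type*} (T : Set G) : Type _ := T

instance {G : Type*} (T : Set G) : TopologicalSpace (DiscreteCopy T) := ⊥

/-- The underlying group element of a point of `DiscreteCopy T`. -/
def DiscreteCopy.elem {G : Type*} {T : Set G} (x : DiscreteCopy T) : G := Subtype.val x

/-!
For `T₁ ⊆ T`, the `𝒜`-set property gives `h ∈ 𝒜` equal to `1` on `T₁` and to `0` off `UT₁`;
by uniform discreteness it vanishes on `T \ T₁`. So disjoint subsets of `T` have disjoint
closures in `G^𝒜`, which characterises `closure ε(T)` as `βT`.

The same functions give the local product structure. If `ε(a)x = ε(b)y` with `a, b ∈ U` and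
`x, y ∈ closure ε(T)`, then for any small neighbourhood `U'` of `e` some `t ∈ T` has
`b⁻¹at ∈ U'T`, and uniform discreteness forces `b⁻¹a ∈ U'`; hence `a = b`. For openness, a left
translate of such an `h` has an open cozero set containing `ε(v)x` and contained in the closed set
`ε(M)·closure ε(T₁)`, where `M ⊆ V` is a compact neighbourhood of `v`.
-/

open Topology

def IsRightUniformlyDiscrete {G : Type*} [Mul G] (U T : Set G) : Prop :=
  ∀ t ∈ T, ∀ t' ∈ T, t ≠ t' → Disjoint (U * ({t} : Set G)) (U * ({t'} : Set G))

theorem IsRightUniformlyDiscrete.eq_of_mul_eq_mul {G : Type*} [Mul G] {U T : Set G}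
    (hdisc : IsRightUniformlyDiscrete U T) {t t' u u' : G} (ht : t ∈ T) (ht' : t' ∈ T)
    (hu : u ∈ U) (hu' : u' ∈ U) (h : u * t = u' * t') : t = t' := by
  by_contra hne
  exact Set.disjoint_left.mp (hdisc t ht t' ht' hne) (Set.mul_mem_mul hu rfl)
    (h ▸ Set.mul_mem_mul hu' rfl)

theorem IsASet.exists_eq_one_of_mem {G : Type*} [TopologicalSpace G] [Group G]
    {A : Set (G → ℂ)} {T : Set G} (hAset : IsASet A T) {U : Set G} (hU : IsOpen U)
    (hU1 : (1 : G) ∈ U) {T₁ : Set G} (hT₁ : T₁ ⊆ T) :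
    ∃ h ∈ A, (∀ t ∈ T₁, h t = 1) ∧ ∀ x ∉ U * T₁, h x = 0 := by
  obtain ⟨V, -, hV1, -, hV⟩ := hAset U hU hU1
  obtain ⟨h, hA, h1, h0⟩ := hV T₁ hT₁
  exact ⟨h, hA, fun t ht => h1 t (Set.subset_mul_right T₁ hV1 ht), h0⟩

theorem DenseRange.subset_closure_image_preimage {α X : Type*} [TopologicalSpace X]
    {f : α → X} (hf : DenseRange f) {O : Set X} (hO : IsOpen O) :
    O ⊆ closure (f '' (f ⁻¹' O)) := by
  rw [Set.image_preimage_eq_inter_range]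
  exact hf.open_subset_closure_inter hO

theorem exists_subset_mem_closure_image_subset {α X : Type*} [TopologicalSpace X]
    [RegularSpace X] {f : α → X} {T : Set α} {x : X} {O : Set X}
    (hx : x ∈ closure (f '' T)) (hO : O ∈ 𝓝 x) :
    ∃ T₁ ⊆ T, x ∈ closure (f '' T₁) ∧ closure (f '' T₁) ⊆ O := by
  obtain ⟨F, hF, hFclosed, hFO⟩ := exists_mem_nhds_isClosed_subset hO
  refine ⟨T ∩ f ⁻¹' interior F, Set.inter_subset_left, ?_, ?_⟩
  · rw [Set.image_inter_preimage, Set.inter_comm]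
    exact isOpen_interior.inter_closure ⟨mem_interior_iff_mem_nhds.mpr hF, hx⟩
  · refine (closure_minimal ?_ hFclosed).trans hFO
    exact (Set.image_inter_preimage f T _ ▸ Set.inter_subset_right).trans interior_subset

theorem exists_homeomorph_stoneCech_closure_range {D X : Type*} [TopologicalSpace D]
    [TopologicalSpace X] [CompactSpace X] [T2Space X] {f : D → X} (hf : Continuous f)
    (hsep : ∀ S₁ S₂ : Set D, Disjoint S₁ S₂ → Disjoint (closure (f '' S₁)) (closure (f '' S₂))) :
    ∃ h : StoneCech D ≃ₜ closure (Set.range f), ∀ d, (h (stoneCechUnit d) : X) = f d := by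
  have : CompactSpace (closure (Set.range f)) :=
    isCompact_iff_compactSpace.mp isClosed_closure.isCompact
  let f₀ : D → closure (Set.range f) := fun d => ⟨f d, subset_closure (Set.mem_range_self d)⟩
  have hf₀ : Continuous f₀ := hf.subtype_mk _
  set g := stoneCechExtend hf₀
  have hgc : Continuous fun z => (g z : X) :=
    continuous_subtype_val.comp (continuous_stoneCechExtend hf₀)
  have hg : (fun z => (g z : X)) ∘ stoneCechUnit = f :=
    funext fun d => congrArg Subtype.val (congrFun (stoneCechExtend_extends hf₀) d)
  have hsurj : Function.Surjective g := by
    intro y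
    have hrange : Set.range f ⊆ Set.range fun z => (g z : X) := by
      rintro _ ⟨d, rfl⟩
      exact ⟨stoneCechUnit d, congrFun hg d⟩
    obtain ⟨z, hz⟩ := closure_minimal hrange (isCompact_range hgc).isClosed y.2
    exact ⟨z, Subtype.ext hz⟩
  have hinj : Function.Injective g := by
    intro x y hxy
    by_contra hne
    obtain ⟨Ox, Oy, hOx, hOy, hx, hy, hO⟩ := t2_separation hne
    have hmem : ∀ {z : StoneCech D} {O : Set (StoneCech D)}, IsOpen O → z ∈ O →
        (g z : X) ∈ closure (f '' (stoneCechUnit ⁻¹' O)) := fun {z O} hO hz => by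
      have himage : f '' (stoneCechUnit ⁻¹' O) =
          (fun z => (g z : X)) '' (stoneCechUnit '' (stoneCechUnit ⁻¹' O)) := by
        rw [← Set.image_comp, hg]
      rw [himage]
      exact image_closure_subset_closure_image hgc
        ⟨_, denseRange_stoneCechUnit.subset_closure_image_preimage hO hz, rfl⟩
    exact (hsep _ _ (hO.preimage _)).ne_of_mem (hmem hOx hx) (hmem hOy hy)
      (congrArg Subtype.val hxy)
  exact ⟨(continuous_stoneCechExtend hf₀).homeoOfEquivCompactToT2
    (f := Equiv.ofBijective g ⟨hinj, hsurj⟩), congrFun hg⟩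

theorem DiscreteCopy.elem_injective {G : Type*} {T : Set G} :
    Function.Injective (DiscreteCopy.elem (T := T)) :=
  fun _ _ h => Subtype.ext h

theorem DiscreteCopy.range_elem {G : Type*} {T : Set G} :
    Set.range (DiscreteCopy.elem (T := T)) = T :=
  Subtype.range_coe

namespace GCompactification

variable {G : Type*} [TopologicalSpace G] [Group G] {A : Set (G → ℂ)}
  {X : Type*} [TopologicalSpace X] [CompactSpace X] [T2Space X] (C : GCompactification G A X)

theorem act_one (x : X) : C.act 1 x = x :=
  congrFun (C.dense.equalizer (C.act_cont 1) continuous_id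
    (funext fun t => by simp [C.act_eps])) x

theorem act_inv_act (s : G) (x : X) : C.act s⁻¹ (C.act s x) = x := by
  rw [← C.act_mul, inv_mul_cancel, act_one]

theorem gelfand_eq_of_mem_closure {f : G → ℂ} (hf : f ∈ A) {S : Set G} {c : ℂ}
    (h : ∀ s ∈ S, f s = c) {z : X} (hz : z ∈ closure (C.eps '' S)) : C.gelfand f z = c := by
  refine Set.EqOn.closure (g := fun _ => c) ?_ (C.gelfand_cont f hf) continuous_const hz
  rintro _ ⟨s, hs, rfl⟩
  exact (C.gelfand_eps f hf s).trans (h s hs)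

theorem gelfand_act {f g : G → ℂ} (hf : f ∈ A) (hg : g ∈ A) {s : G}
    (hfg : ∀ t, f (s * t) = g t) (z : X) : C.gelfand f (C.act s z) = C.gelfand g z :=
  congrFun (C.dense.equalizer ((C.gelfand_cont f hf).comp (C.act_cont s)) (C.gelfand_cont g hg)
    (funext fun t => by simp [C.act_eps, C.gelfand_eps f hf, C.gelfand_eps g hg, hfg])) z

theorem disjoint_closure_eps_image {U T : Set G} (hUopen : IsOpen U) (hU1 : (1 : G) ∈ U)
    (hdisc : IsRightUniformlyDiscrete U T) (hAset : IsASet A T) {T₁ T₂ : Set G}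
    (hT₁ : T₁ ⊆ T) (hT₂ : T₂ ⊆ T) (hT : Disjoint T₁ T₂) :
    Disjoint (closure (C.eps '' T₁)) (closure (C.eps '' T₂)) := by
  obtain ⟨h, hA, h1, h0⟩ := hAset.exists_eq_one_of_mem hUopen hU1 hT₁
  have hT₂zero : ∀ t ∈ T₂, h t = 0 := by
    refine fun t ht => h0 t ?_
    rintro ⟨u, hu, t₁, ht₁, hut⟩
    exact hT.ne_of_mem ht₁ ht
      (hdisc.eq_of_mul_eq_mul (hT₁ ht₁) (hT₂ ht) hu hU1 (hut.trans (one_mul t).symm))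
  refine Set.disjoint_left.mpr fun z hz₁ hz₂ => (one_ne_zero (α := ℂ)) ?_
  rw [← C.gelfand_eq_of_mem_closure hA h1 hz₁, C.gelfand_eq_of_mem_closure hA hT₂zero hz₂]

theorem exists_homeomorph_stoneCech {U T : Set G} (hUopen : IsOpen U) (hU1 : (1 : G) ∈ U)
    (hdisc : IsRightUniformlyDiscrete U T) (hAset : IsASet A T) :
    ∃ h : StoneCech (DiscreteCopy T) ≃ₜ closure (C.eps '' T),
      ∀ t : DiscreteCopy T, (h (stoneCechUnit t) : X) = C.eps t.elem := by
  have hrange : C.eps '' T = Set.range (C.eps ∘ DiscreteCopy.elem (T := T)) := by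
    rw [Set.range_comp, DiscreteCopy.range_elem]
  rw [hrange]
  refine exists_homeomorph_stoneCech_closure_range continuous_bot fun S₁ S₂ hS => ?_
  have hsub : ∀ S : Set (DiscreteCopy T), DiscreteCopy.elem '' S ⊆ T :=
    fun S => (Set.image_subset_range _ S).trans DiscreteCopy.range_elem.subset
  rw [Set.image_comp, Set.image_comp]
  exact C.disjoint_closure_eps_image hUopen hU1 hdisc hAset (hsub S₁) (hsub S₂)
    ((Set.disjoint_image_iff DiscreteCopy.elem_injective).mpr hS)

theorem closure_eps_image_mul_subset (hjc : Continuous fun p : G × X => C.act p.1 p.2)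
    {M : Set G} (hM : IsCompact M) (S : Set G) :
    closure (C.eps '' (M * S)) ⊆ Set.image2 C.act M (closure (C.eps '' S)) := by
  refine closure_minimal ?_ ?_
  · rintro _ ⟨_, ⟨m, hm, s, hs, rfl⟩, rfl⟩
    rw [← C.act_eps]
    exact Set.mem_image2_of_mem hm (subset_closure (Set.mem_image_of_mem _ hs))
  · rw [← Set.image_prod]
    exact ((hM.prod isClosed_closure.isCompact).image hjc).isClosed

theorem isOpen_image2_act_closure [IsTopologicalGroup G] [LocallyCompactSpace G]
    (hjc : Continuous fun p : G × X => C.act p.1 p.2)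
    (hlinv : ∀ f ∈ A, ∀ s : G, (fun t => f (s * t)) ∈ A) {T : Set G} (hAset : IsASet A T)
    {V : Set G} (hV : IsOpen V) {T₁ : Set G} (hT₁ : T₁ ⊆ T) :
    IsOpen (Set.image2 C.act V (closure (C.eps '' T₁))) := by
  rw [isOpen_iff_forall_mem_open]
  rintro _ ⟨v, hv, x, hx, rfl⟩
  obtain ⟨M, hM, hMV, hMcompact⟩ := local_compact_nhds (hV.mem_nhds hv)
  have hW : IsOpen ((v * ·) ⁻¹' interior M) :=
    isOpen_interior.preimage (continuous_const_mul v)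
  have hW1 : (1 : G) ∈ (v * ·) ⁻¹' interior M := by
    simpa using mem_interior_iff_mem_nhds.mpr hM
  obtain ⟨h, hA, h1, h0⟩ := hAset.exists_eq_one_of_mem hW hW1 hT₁
  set f : G → ℂ := fun s => h (v⁻¹ * s)
  have hAv : f ∈ A := hlinv h hA v⁻¹
  have hcozero : IsOpen {z | C.gelfand f z ≠ 0} :=
    isOpen_compl_singleton.preimage (C.gelfand_cont f hAv)
  have hsupport : C.eps ⁻¹' {z | C.gelfand f z ≠ 0} ⊆ M * T₁ := by
    intro s hs
    change C.gelfand f (C.eps s) ≠ 0 at hs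
    rw [C.gelfand_eps f hAv] at hs
    obtain ⟨w, hw, t, ht, hwt⟩ := Set.mem_mul.mp (not_imp_comm.mp (h0 _) hs)
    refine ⟨v * w, interior_subset hw, t, ht, ?_⟩
    change v * w * t = s
    rw [mul_assoc, hwt, mul_inv_cancel_left]
  refine ⟨{z | C.gelfand f z ≠ 0}, ?_, hcozero, ?_⟩
  · exact (C.dense.subset_closure_image_preimage hcozero).trans <|
      (closure_mono (Set.image_mono hsupport)).trans <|
      (C.closure_eps_image_mul_subset hjc hMcompact T₁).trans (Set.image2_subset_right hMV)
  · have hHx : C.gelfand f (C.act v x) = 1 := by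
      rw [C.gelfand_act hAv hA (fun t => congrArg h (inv_mul_cancel_left v t)) x]
      exact C.gelfand_eq_of_mem_closure hA h1 hx
    simp [hHx]

theorem eq_of_act_eq_act [IsTopologicalGroup G] [T1Space G] {U T : Set G} (hUopen : IsOpen U)
    (hU1 : (1 : G) ∈ U) (hdisc : IsRightUniformlyDiscrete U T) (hAset : IsASet A T)
    {a b : G} (ha : a ∈ U) (hb : b ∈ U) {x y : X} (hx : x ∈ closure (C.eps '' T))
    (hy : y ∈ closure (C.eps '' T)) (hxy : C.act a x = C.act b y) : a = b := by
  suffices hspec : (b⁻¹ * a) ⤳ 1 from (inv_mul_eq_one.mp hspec.eq).symm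
  refine specializes_iff_forall_open.mpr fun N hN hN1 => ?_
  set U' := N ∩ U ∩ (b * ·) ⁻¹' U
  have hU' : IsOpen U' := (hN.inter hUopen).inter (hUopen.preimage (continuous_const_mul b))
  obtain ⟨h, hA, h1, h0⟩ :=
    hAset.exists_eq_one_of_mem hU' ⟨⟨hN1, hU1⟩, by simpa using hb⟩ subset_rfl
  have hHc : Continuous fun z => C.gelfand h (C.act (b⁻¹ * a) z) :=
    (C.gelfand_cont h hA).comp (C.act_cont _)
  have hHx : C.gelfand h (C.act (b⁻¹ * a) x) = 1 := by
    rw [C.act_mul, hxy, C.act_inv_act]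
    exact C.gelfand_eq_of_mem_closure hA h1 hy
  obtain ⟨_, hHt, t, ht, rfl⟩ := mem_closure_iff.mp hx _
    ((isOpen_compl_singleton (x := (0 : ℂ))).preimage hHc) (by simp [hHx])
  rw [Set.mem_preimage, C.act_eps, C.gelfand_eps h hA] at hHt
  obtain ⟨u, hu, t', ht', hut⟩ := Set.mem_mul.mp (not_imp_comm.mp (h0 _) hHt)
  have htt' : t = t' := hdisc.eq_of_mul_eq_mul ht ht' ha hu.2 <| by
    rw [mul_assoc, hut, mul_assoc, mul_inv_cancel_left]
  subst htt'
  exact mul_right_cancel hut ▸ hu.1.1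

theorem isOpenMap_act_prod [IsTopologicalGroup G] [LocallyCompactSpace G]
    (hjc : Continuous fun p : G × X => C.act p.1 p.2)
    (hlinv : ∀ f ∈ A, ∀ s : G, (fun t => f (s * t)) ∈ A) {T : Set G} (hAset : IsASet A T)
    {V : Set G} (hV : IsOpen V) :
    IsOpenMap fun p : V × closure (C.eps '' T) => C.act (p.1 : G) (p.2 : X) := by
  refine IsOpenMap.of_nhds_le fun ⟨⟨v, hv⟩, ⟨x, hx⟩⟩ s hs => ?_
  rw [Filter.mem_map, nhds_prod_eq, Filter.mem_prod_iff] at hs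
  obtain ⟨N₁, hN₁, N₂, hN₂, hN⟩ := hs
  obtain ⟨V₁, hV₁, hV₁N⟩ := (mem_nhds_subtype _ _ _).mp hN₁
  obtain ⟨O, hO, hON⟩ := (mem_nhds_subtype _ _ _).mp hN₂
  obtain ⟨T₁, hT₁, hxT₁, hT₁O⟩ := exists_subset_mem_closure_image_subset hx hO
  refine Filter.mem_of_superset ((C.isOpen_image2_act_closure hjc hlinv hAset
    (isOpen_interior.inter hV) hT₁).mem_nhds
      (Set.mem_image2_of_mem ⟨mem_interior_iff_mem_nhds.mpr hV₁, hv⟩ hxT₁)) ?_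
  rintro _ ⟨v', hv', x', hx', rfl⟩
  exact hN (a := (⟨v', hv'.2⟩, ⟨x', closure_mono (Set.image_mono hT₁) hx'⟩))
    ⟨hV₁N (show v' ∈ V₁ from interior_subset hv'.1), hON (hT₁O hx')⟩

theorem exists_homeomorph_prod_image2 [IsTopologicalGroup G] [LocallyCompactSpace G] [T1Space G]
    (hjc : Continuous fun p : G × X => C.act p.1 p.2)
    (hlinv : ∀ f ∈ A, ∀ s : G, (fun t => f (s * t)) ∈ A) {U T : Set G} (hUopen : IsOpen U)
    (hU1 : (1 : G) ∈ U) (hdisc : IsRightUniformlyDiscrete U T) (hAset : IsASet A T)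
    {V : Set G} (hV : IsOpen V) (hVU : V ⊆ U) :
    ∃ e : ↥V × ↥(closure (C.eps '' T)) ≃ₜ ↥(Set.image2 C.act V (closure (C.eps '' T))),
      ∀ p, (e p : X) = C.act (p.1 : G) (p.2 : X) := by
  let Φ : ↥V × ↥(closure (C.eps '' T)) → ↥(Set.image2 C.act V (closure (C.eps '' T))) :=
    fun p => ⟨C.act p.1 p.2, Set.mem_image2_of_mem p.1.2 p.2.2⟩
  have hinj : Function.Injective Φ := by
    rintro ⟨⟨v, hv⟩, ⟨x, hx⟩⟩ ⟨⟨v', hv'⟩, ⟨x', hx'⟩⟩ hΦ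
    have hact : C.act v x = C.act v' x' := congrArg Subtype.val hΦ
    obtain rfl := C.eq_of_act_eq_act hUopen hU1 hdisc hAset (hVU hv) (hVU hv') hx hx' hact
    obtain rfl : x = x' := by rw [← C.act_inv_act v x, hact, C.act_inv_act]
    rfl
  have hsurj : Function.Surjective Φ := by
    rintro ⟨_, v, hv, x, hx, rfl⟩
    exact ⟨(⟨v, hv⟩, ⟨x, hx⟩), rfl⟩
  have hΦc : Continuous Φ :=
    (hjc.comp ((continuous_subtype_val.comp continuous_fst).prodMk
      (continuous_subtype_val.comp continuous_snd))).subtype_mk _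
  exact ⟨(Equiv.ofBijective Φ ⟨hinj, hsurj⟩).toHomeomorphOfContinuousOpen hΦc
    ((C.isOpenMap_act_prod hjc hlinv hAset hV).subtype_mk _), fun _ => rfl⟩

end GCompactification

theorem A_local_structure_theorem_general
    {G : Type*} [TopologicalSpace G] [Group G] [IsTopologicalGroup G]
    [LocallyCompactSpace G] [T2Space G]
    (A : Set (G → ℂ)) {X : Type*} [TopologicalSpace X] [CompactSpace X] [T2Space X]
    (C : GCompactification G A X)
    (hlinv : ∀ f ∈ A, ∀ s : G, (fun t => f (s * t)) ∈ A)
    (hjc : Continuous fun p : G × X => C.act p.1 p.2)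
    (U : Set G) (hUopen : IsOpen U) (hU1 : (1 : G) ∈ U)
    (T : Set G)
    (hdisc : ∀ t ∈ T, ∀ t' ∈ T, t ≠ t' → Disjoint (U * ({t} : Set G)) (U * ({t'} : Set G)))
    (hAset : IsASet A T) :
    (∃ h : StoneCech (DiscreteCopy T) ≃ₜ (closure (C.eps '' T) : Set X),
      ∀ t : DiscreteCopy T, (h (stoneCechUnit t) : X) = C.eps t.elem) ∧
    ∀ V : Set G, IsOpen V → (1 : G) ∈ V → closure V ⊆ U →
      IsOpen (Set.image2 C.act V (closure (C.eps '' T))) ∧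
      ∃ e : ↥V × ↥(closure (C.eps '' T)) ≃ₜ ↥(Set.image2 C.act V (closure (C.eps '' T))),
        ∀ p, (e p : X) = C.act (p.1 : G) (p.2 : X) := by
  refine ⟨C.exists_homeomorph_stoneCech hUopen hU1 hdisc hAset, fun V hV _ hVU => ?_⟩
  have hVsubU : V ⊆ U := subset_closure.trans hVU
  exact ⟨C.isOpen_image2_act_closure hjc hlinv hAset hV subset_rfl,
    C.exists_homeomorph_prod_image2 hjc hlinv hUopen hU1 hdisc hAset hV hVsubU⟩

/-- The `𝒜`-Local Structure Theorem: if `T` is a right `U`-uniformly discrete `𝒜`-set then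
`closure(ε(T))` is homeomorphic to the Stone–Čech compactification `βT` of the discrete set `T`
(via the natural map), and for every open neighbourhood `V` of `e` with `closure V ⊆ U` the set
`ε(V)·closure(ε(T))` is open in `G^𝒜` and the natural map `V × closure(ε(T)) → G^𝒜`,
`(v, x) ↦ ε(v)x`, is a homeomorphism onto it. -/
theorem A_local_structure_theorem
    {G : Type*} [TopologicalSpace G] [Group G] [IsTopologicalGroup G]
    [LocallyCompactSpace G] [T2Space G]
    (A : Set (G → ℂ)) {X : Type*} [TopologicalSpace X] [CompactSpace X] [T2Space X]
    (C : GCompactification G A X)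
    (hone : (fun _ : G => (1 : ℂ)) ∈ A)
    (hlinv : ∀ f ∈ A, ∀ s : G, (fun t => f (s * t)) ∈ A)
    (hjc : Continuous fun p : G × X => C.act p.1 p.2)
    (U : Set G) (hUopen : IsOpen U) (hU1 : (1 : G) ∈ U)
    (T : Set G)
    (hdisc : ∀ t ∈ T, ∀ t' ∈ T, t ≠ t' → Disjoint (U * ({t} : Set G)) (U * ({t'} : Set G)))
    (hAset : IsASet A T) :
    (∃ h : StoneCech (DiscreteCopy T) ≃ₜ (closure (C.eps '' T) : Set X),
      ∀ t : DiscreteCopy T, (h (stoneCechUnit t) : X) = C.eps t.elem) ∧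
    ∀ V : Set G, IsOpen V → (1 : G) ∈ V → closure V ⊆ U →
      IsOpen (Set.image2 C.act V (closure (C.eps '' T))) ∧
      ∃ e : ↥V × ↥(closure (C.eps '' T)) ≃ₜ ↥(Set.image2 C.act V (closure (C.eps '' T))),
        ∀ p, (e p : X) = C.act (p.1 : G) (p.2 : X) :=
  A_local_structure_theorem_general A C hlinv hjc U hUopen hU1 T hdisc hAset
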